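/- Let f : ℝ² → ℝ be bounded and continuous with ∂_x f continuous and bounded, and define A = f ∂_x on L²(ℝ²). Then for all u ∈ D(A), ⟨Au, u⟩_{L²} ≥ −(1/2)‖∂_x f‖_{L^∞} ‖u‖_{L²}². -/

import Mathlib

open MeasureTheory Filter
open scoped ENNReal

noncomputable section

/-- Fourier transform on ℝ². -/
def FT2 (f : ℝ × ℝ → ℂ) : ℝ × ℝ → ℂ := fun p =>
  ∫ q : ℝ × ℝ, Complex.exp (-((2 * Real.pi * (p.1 * q.1 + p.2 * q.2) : ℝ) : ℂ) * Complex.I) * f q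

/-- Inverse Fourier transform on ℝ². -/
def IFT2 (f : ℝ × ℝ → ℂ) : ℝ × ℝ → ℂ := fun x =>
  ∫ p : ℝ × ℝ, Complex.exp (((2 * Real.pi * (x.1 * p.1 + x.2 * p.2) : ℝ) : ℂ) * Complex.I) * f p

/-- Homogeneous fractional derivative in `x`, symbol `|ξ|^s`. -/
def Dx (s : ℝ) (f : ℝ × ℝ → ℂ) : ℝ × ℝ → ℂ :=
  IFT2 fun p => ((|p.1| ^ s : ℝ) : ℂ) * FT2 f p

/-- Fractional derivative in `x` with complex order `β`. -/
def DxC (β : ℂ) (f : ℝ × ℝ → ℂ) : ℝ × ℝ → ℂ :=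
  IFT2 fun p => (((|p.1| : ℝ) : ℂ) ^ β) * FT2 f p

/-- Inhomogeneous derivative `J_x^s = (1+|D_x|²)^{s/2}`. -/
def Jx (s : ℝ) (f : ℝ × ℝ → ℂ) : ℝ × ℝ → ℂ :=
  IFT2 fun p => (((1 + p.1 ^ 2) ^ (s / 2) : ℝ) : ℂ) * FT2 f p

/-- Real-valued version of `J_x^s`. -/
def JxR (s : ℝ) (f : ℝ × ℝ → ℝ) : ℝ × ℝ → ℝ := fun z =>
  (Jx s (fun w => ((f w : ℝ) : ℂ)) z).re

/-- The unitary group `W_α(t)` with symbol `e^{-it(ξ³+sgn(ξ)|ξ|^α η²)}`. -/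
def Wgrp (α t : ℝ) (f : ℝ × ℝ → ℂ) : ℝ × ℝ → ℂ :=
  IFT2 fun p =>
    Complex.exp (-Complex.I * (t : ℂ) *
      ((p.1 ^ 3 + Real.sign p.1 * |p.1| ^ α * p.2 ^ 2 : ℝ) : ℂ)) * FT2 f p

/-- The operator `ℋ D_x^α` (Hilbert transform composed with fractional derivative in `x`). -/
def HDa (α : ℝ) (f : ℝ × ℝ → ℂ) : ℝ × ℝ → ℂ :=
  IFT2 fun p => (-Complex.I) * ((Real.sign p.1 * |p.1| ^ α : ℝ) : ℂ) * FT2 f p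

/-- Anisotropic Sobolev norm of `H^{s₁,s₂}(ℝ²)`. -/
def HNorm2 (s₁ s₂ : ℝ) (f : ℝ × ℝ → ℂ) : ℝ :=
  Real.sqrt (∫ p : ℝ × ℝ, ((1 + p.1 ^ 2) ^ s₁ + (1 + p.2 ^ 2) ^ s₂) * ‖FT2 f p‖ ^ 2)

/-- Membership in the anisotropic Sobolev space `H^{s₁,s₂}(ℝ²)`. -/
def MemH (s₁ s₂ : ℝ) (f : ℝ × ℝ → ℂ) : Prop :=
  Integrable (fun p : ℝ × ℝ => ((1 + p.1 ^ 2) ^ s₁ + (1 + p.2 ^ 2) ^ s₂) * ‖FT2 f p‖ ^ 2) volume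

/-- Homogeneous anisotropic Sobolev norm. -/
def HdotNorm (s₁ s₂ : ℝ) (f : ℝ × ℝ → ℂ) : ℝ :=
  Real.sqrt (∫ p : ℝ × ℝ, (|p.1| ^ (2 * s₁) + |p.2| ^ (2 * s₂)) * ‖FT2 f p‖ ^ 2)

/-- `u` solves `u_t = u_{xxx} - ℋ D_x^α u_{yy} + u u_x` (complex-valued version). -/
def IsSol (α : ℝ) (u : ℝ → ℝ × ℝ → ℂ) : Prop :=
  ∀ t : ℝ, ∀ z : ℝ × ℝ,
    HasDerivAt (fun s => u s z)
      (iteratedDeriv 3 (fun a => u t (a, z.2)) z.1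
        - HDa α (fun w => iteratedDeriv 2 (fun b => u t (w.1, b)) w.2) z
        + u t z * deriv (fun a => u t (a, z.2)) z.1) t

/-- `u` solves `u_t = u_{xxx} - ℋ D_x^α u_{yy} + u u_x` (real-valued version). -/
def IsSolR (α : ℝ) (u : ℝ → ℝ × ℝ → ℝ) : Prop :=
  ∀ t : ℝ, ∀ z : ℝ × ℝ,
    HasDerivAt (fun s => u s z)
      (iteratedDeriv 3 (fun a => u t (a, z.2)) z.1
        - (HDa α (fun w => ((iteratedDeriv 2 (fun b => u t (w.1, b)) w.2 : ℝ) : ℂ)) z).re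
        + u t z * deriv (fun a => u t (a, z.2)) z.1) t

/-- `u` solves the equation on the time interval `[0,T]` (real-valued version). -/
def IsSolROn (α T : ℝ) (u : ℝ → ℝ × ℝ → ℝ) : Prop :=
  ∀ t ∈ Set.Icc (0 : ℝ) T, ∀ z : ℝ × ℝ,
    HasDerivAt (fun s => u s z)
      (iteratedDeriv 3 (fun a => u t (a, z.2)) z.1
        - (HDa α (fun w => ((iteratedDeriv 2 (fun b => u t (w.1, b)) w.2 : ℝ) : ℂ)) z).re
        + u t z * deriv (fun a => u t (a, z.2)) z.1) t

/-- `w` solves the inhomogeneous linear equation `∂_t w = w_{xxx} - ℋ D_x^α w_{yy} + F` on `[0,T]`. -/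
def IsSolLin (α T : ℝ) (w F : ℝ → ℝ × ℝ → ℂ) : Prop :=
  ∀ t ∈ Set.Icc (0 : ℝ) T, ∀ z : ℝ × ℝ,
    HasDerivAt (fun s => w s z)
      (iteratedDeriv 3 (fun a => w t (a, z.2)) z.1
        - HDa α (fun q => iteratedDeriv 2 (fun b => w t (q.1, b)) q.2) z
        + F t z) t

/-! On every horizontal line, `f u²` is integrable with integrable `x`-derivative
`f' u² + 2 f u' u`, so that derivative integrates to zero. Hence
`⟨f ∂ₓu, u⟩ = -½ ∫ f' u² ≥ -½ ‖f'‖_∞ ‖u‖₂²`. -/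

lemma MeasureTheory.MemLp.toReal_eLpNorm_two_sq {α E : Type*} [MeasurableSpace α] {μ : Measure α}
    [NormedAddCommGroup E] {u : α → E} (hu : MemLp u 2 μ) :
    (eLpNorm u 2 μ).toReal ^ 2 = ∫ z, ‖u z‖ ^ 2 ∂μ := by
  have hnn : 0 ≤ ∫ z, ‖u z‖ ^ 2 ∂μ := integral_nonneg fun z => by positivity
  rw [hu.eLpNorm_eq_integral_rpow_norm two_ne_zero ENNReal.ofNat_ne_top,
    ENNReal.toReal_ofReal (by positivity)]
  simp only [ENNReal.toReal_ofNat, Real.rpow_two]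
  rw [← Real.rpow_two, ← Real.rpow_mul hnn]
  norm_num

theorem integral_eq_zero_of_hasDerivAt_fst_of_integrable {α E : Type*} [MeasurableSpace α]
    {μ : Measure α} [SFinite μ] [NormedAddCommGroup E] [NormedSpace ℝ E] [CompleteSpace E]
    {F F' : ℝ × α → E} (hderiv : ∀ z, HasDerivAt (fun x => F (x, z.2)) (F' z) z.1)
    (hF' : Integrable F' (volume.prod μ)) (hF : Integrable F (volume.prod μ)) :
    ∫ z, F' z ∂(volume.prod μ) = 0 := by
  rw [integral_prod_symm F' hF']
  refine integral_eq_zero_of_ae ?_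
  filter_upwards [hF'.prod_left_ae, hF.prod_left_ae] with y hF'y hFy
  exact integral_eq_zero_of_hasDerivAt_of_integrable (fun x => hderiv (x, y)) hF'y hFy

theorem integral_mul_deriv_fst_mul_self {f f' u u' : ℝ × ℝ → ℝ} {M K : ℝ}
    (hfc : Continuous f) (hfM : ∀ z, |f z| ≤ M)
    (hfd : ∀ z : ℝ × ℝ, HasDerivAt (fun x => f (x, z.2)) (f' z) z.1)
    (hf'c : Continuous f') (hf'K : ∀ z, |f' z| ≤ K)
    (hu : MemLp u 2 volume)
    (hud : ∀ z : ℝ × ℝ, HasDerivAt (fun x => u (x, z.2)) (u' z) z.1)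
    (hAu : MemLp (fun z => f z * u' z) 2 volume) :
    ∫ z, f z * u' z * u z = -(1 / 2) * ∫ z, f' z * u z ^ 2 := by
  have hu2 : Integrable (fun z => u z ^ 2) := hu.integrable_sq
  have hfu2 : Integrable (fun z => f z * u z ^ 2) :=
    hu2.bdd_mul hfc.aestronglyMeasurable (ae_of_all _ hfM)
  have hf'u2 : Integrable (fun z => f' z * u z ^ 2) :=
    hu2.bdd_mul hf'c.aestronglyMeasurable (ae_of_all _ hf'K)
  have hAuu : Integrable (fun z => f z * u' z * u z) := hAu.integrable_mul hu
  have hderiv : ∀ z : ℝ × ℝ, HasDerivAt (fun x => f (x, z.2) * u (x, z.2) ^ 2)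
      (f' z * u z ^ 2 + 2 * (f z * u' z * u z)) z.1 := fun z =>
    ((hfd z).fun_mul ((hud z).fun_pow 2)).congr_deriv (by simp only [Prod.mk.eta]; ring)
  have hzero := integral_eq_zero_of_hasDerivAt_fst_of_integrable (μ := volume)
    (F' := fun z => f' z * u z ^ 2 + 2 * (f z * u' z * u z)) hderiv
    (hf'u2.add (hAuu.const_mul 2)) hfu2
  rw [← Measure.volume_eq_prod, integral_add hf'u2 (hAuu.const_mul 2), integral_const_mul]
    at hzero
  linarith

theorem stmt5 (f f' u u' : ℝ × ℝ → ℝ)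
    (hfc : Continuous f) (hfb : ∃ M, ∀ z, |f z| ≤ M)
    (hfd : ∀ z : ℝ × ℝ, HasDerivAt (fun x => f (x, z.2)) (f' z) z.1)
    (hf'c : Continuous f') (hf'b : ∃ M, ∀ z, |f' z| ≤ M)
    (hu : MemLp u 2 volume)
    (hud : ∀ z : ℝ × ℝ, HasDerivAt (fun x => u (x, z.2)) (u' z) z.1)
    (hAu : MemLp (fun z => f z * u' z) 2 volume) :
    -(1 / 2) * sSup (Set.range fun z => |f' z|) * (eLpNorm u 2 volume).toReal ^ 2 ≤
      ∫ z : ℝ × ℝ, f z * u' z * u z := by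
  obtain ⟨M, hfM⟩ := hfb
  obtain ⟨K, hf'K⟩ := hf'b
  set C := sSup (Set.range fun z => |f' z|)
  have hf'C : ∀ z, |f' z| ≤ C :=
    fun z => le_csSup ⟨K, Set.forall_mem_range.2 hf'K⟩ ⟨z, rfl⟩
  have hbound : ∫ z, f' z * u z ^ 2 ≤ C * ∫ z, u z ^ 2 := by
    rw [← integral_const_mul]
    exact integral_mono (hu.integrable_sq.bdd_mul hf'c.aestronglyMeasurable (ae_of_all _ hf'K))
      (hu.integrable_sq.const_mul C)
      fun z => mul_le_mul_of_nonneg_right ((le_abs_self _).trans (hf'C z)) (sq_nonneg _)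
  rw [integral_mul_deriv_fst_mul_self hfc hfM hfd hf'c hf'C hu hud hAu, hu.toReal_eLpNorm_two_sq]
  simp only [Real.norm_eq_abs, sq_abs]
  linarith
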